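/- Let h : ℝ → ℝ be Lipschitz continuous and t > 0. If x₁ < x₂, y₁ is a minimizer of y ↦ (x₁−y)²/(2t) + h(y), and y₂ is a minimizer of y ↦ (x₂−y)²/(2t) + h(y), then y₁ ≤ y₂. In particular the minimizing map x ↦ y(x,t) is nondecreasing in x. -/

import Mathlib

/-!
Exchange argument: if `y₂ < y₁`, comparing each minimizer with the other's choice and adding
the two inequalities cancels `h` and leaves
`(x₁ - y₁)² + (x₂ - y₂)² ≤ (x₁ - y₂)² + (x₂ - y₁)²`, whereas the difference of the two sides is
`2 (x₂ - x₁) (y₁ - y₂) > 0`. This says the cost `(x - y)² / (2t)` is strictly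
submodular, and the exchange argument works for any strictly submodular cost.
-/

theorem minimizer_le_of_strictSubmodular {α β M : Type*} [LinearOrder α] [LinearOrder β]
    [AddCommMonoid M] [LinearOrder M] [IsOrderedCancelAddMonoid M] (c : α → β → M)
    (hc : ∀ ⦃x₁ x₂ y₁ y₂⦄, x₁ < x₂ → y₂ < y₁ → c x₁ y₂ + c x₂ y₁ < c x₁ y₁ + c x₂ y₂)
    (h : β → M) {x₁ x₂ : α} {y₁ y₂ : β} (hx : x₁ < x₂)
    (h₁ : ∀ z, c x₁ y₁ + h y₁ ≤ c x₁ z + h z) (h₂ : ∀ z, c x₂ y₂ + h y₂ ≤ c x₂ z + h z) :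
    y₁ ≤ y₂ := by
  by_contra! hy
  have hsum : c x₁ y₁ + c x₂ y₂ + (h y₁ + h y₂) ≤ c x₁ y₂ + c x₂ y₁ + (h y₁ + h y₂) :=
    calc c x₁ y₁ + c x₂ y₂ + (h y₁ + h y₂) = (c x₁ y₁ + h y₁) + (c x₂ y₂ + h y₂) := by abel
      _ ≤ (c x₁ y₂ + h y₂) + (c x₂ y₁ + h y₁) := add_le_add (h₁ y₂) (h₂ y₁)
      _ = c x₁ y₂ + c x₂ y₁ + (h y₁ + h y₂) := by abel
  exact (le_of_add_le_add_right hsum).not_gt (hc hx hy)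

theorem strictSubmodular_sq_sub_div {t : ℝ} (ht : 0 < t) ⦃x₁ x₂ y₁ y₂ : ℝ⦄ (hx : x₁ < x₂)
    (hy : y₂ < y₁) :
    (x₁ - y₂) ^ 2 / (2 * t) + (x₂ - y₁) ^ 2 / (2 * t) <
      (x₁ - y₁) ^ 2 / (2 * t) + (x₂ - y₂) ^ 2 / (2 * t) := by
  have hgap : (x₁ - y₁) ^ 2 / (2 * t) + (x₂ - y₂) ^ 2 / (2 * t) -
      ((x₁ - y₂) ^ 2 / (2 * t) + (x₂ - y₁) ^ 2 / (2 * t)) = (x₂ - x₁) * (y₁ - y₂) / t := by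
    field_simp
    ring
  have hpos : 0 < (x₂ - x₁) * (y₁ - y₂) / t := div_pos (mul_pos (sub_pos.2 hx) (sub_pos.2 hy)) ht
  linarith

theorem hopfLax_minimizer_nondecreasing (h : ℝ → ℝ)
    (t : ℝ) (ht : 0 < t) (x₁ x₂ y₁ y₂ : ℝ) (hx : x₁ < x₂)
    (h₁ : ∀ z : ℝ, (x₁ - y₁) ^ 2 / (2 * t) + h y₁ ≤ (x₁ - z) ^ 2 / (2 * t) + h z)
    (h₂ : ∀ z : ℝ, (x₂ - y₂) ^ 2 / (2 * t) + h y₂ ≤ (x₂ - z) ^ 2 / (2 * t) + h z) :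
    y₁ ≤ y₂ :=
  minimizer_le_of_strictSubmodular (fun x y => (x - y) ^ 2 / (2 * t))
    (strictSubmodular_sq_sub_div ht) h hx h₁ h₂
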